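/- arXiv:2601.04479 — 2 statements merged into one kernel-verified Lean document; each statement's English description precedes it below -/
import Mathlib

section
/- For any B ∈ ℂ^{n×k} with k ≤ n, the maximum of Re(tr(Pᴴ B)) over all P ∈ ℂ^{n×k} with Pᴴ P = I_k equals ‖B‖_tr, and the maximum is attained at any orthonormal polar factor P_* of B. -/
open scoped ComplexOrder
open Matrix

/-- The tuple `f` rearranged into decreasing order; `sortedDesc f 0` is the largest entry. -/
noncomputable def sortedDesc {m : ℕ} (f : Fin m → ℝ) : Fin m → ℝ :=
  fun i => (f ∘ Tuple.sort f) i.rev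

/-- The singular values of a complex matrix, in decreasing order. -/
noncomputable def sv {n k : ℕ} (B : Matrix (Fin n) (Fin k) ℂ) : Fin k → ℝ :=
  sortedDesc fun i =>
    Real.sqrt ((Matrix.posSemidef_conjTranspose_mul_self B).isHermitian.eigenvalues i)

/-- The trace (nuclear) norm: the sum of the singular values. -/
noncomputable def trNorm {n k : ℕ} (B : Matrix (Fin n) (Fin k) ℂ) : ℝ := ∑ i, sv B i

/-- The Frobenius norm. -/
noncomputable def frobNorm {n k : ℕ} (A : Matrix (Fin n) (Fin k) ℂ) : ℝ :=
  Real.sqrt (∑ i, ∑ j, ‖A i j‖ ^ 2)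

/-- `‖sin Θ(R(X), R(Y))‖_F` where `Θ` is the diagonal matrix of canonical angles
`θ_i = arccos σ_i(Xᴴ Y)` between the column spaces of `X` and `Y`. -/
noncomputable def sinThetaF {n k : ℕ} (X Y : Matrix (Fin n) (Fin k) ℂ) : ℝ :=
  Real.sqrt (∑ i, Real.sin (Real.arccos (sv (Xᴴ * Y) i)) ^ 2)

/-- The smallest singular value. -/
noncomputable def smin {n k : ℕ} (B : Matrix (Fin n) (Fin k) ℂ) : ℝ := ⨅ i, sv B i

/-- The spectral norm (largest singular value). -/
noncomputable def s2norm {n k : ℕ} (B : Matrix (Fin n) (Fin k) ℂ) : ℝ := ⨆ i, sv B i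

/-- The orthonormal polar factor `B (Bᴴ B)^{-1/2}` (for `B` of full column rank). -/
noncomputable def polarFactor {n k : ℕ} (B : Matrix (Fin n) (Fin k) ℂ) :
    Matrix (Fin n) (Fin k) ℂ :=
  B * ((Matrix.posSemidef_conjTranspose_mul_self B).isHermitian.eigenvectorUnitary.1 *
    diagonal ((↑) ∘ Real.sqrt ∘ (Matrix.posSemidef_conjTranspose_mul_self B).isHermitian.eigenvalues) *
    (star (Matrix.posSemidef_conjTranspose_mul_self B).isHermitian.eigenvectorUnitary :
      Matrix (Fin k) (Fin k) ℂ))⁻¹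

/-- Eigenvalues of a Hermitian matrix, in decreasing order. -/
noncomputable def eigsDesc {n : ℕ} {H : Matrix (Fin n) (Fin n) ℂ} (hH : H.IsHermitian) :
    Fin n → ℝ :=
  sortedDesc hH.eigenvalues

/-! Diagonalize `Bᴴ B = V diag(μ) Vᴴ`. The columns of `B V` are orthogonal with norms `√μᵢ`,
and `tr (Pᴴ B) = tr ((P V)ᴴ (B V))` is the sum of the inner products of the columns of `P V`,
which are unit vectors, with those of `B V`; by Cauchy–Schwarz its real part is at most
`∑ √μᵢ = ‖B‖_tr`. If `B = P Λ` with `Pᴴ P = 1` and `Λ ⪰ 0`, then `Λ² = Bᴴ B`, so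
`Λ = (Bᴴ B)^{1/2}` and `tr (Pᴴ B) = tr Λ = ∑ √μᵢ`. For `k ≤ n` such a polar decomposition exists:
complete the normalized nonzero columns of `B V` to an orthonormal family of `k` vectors. -/

open scoped InnerProductSpace
open Module

section InnerProductSpace

variable {𝕜 E ι : Type*} [RCLike 𝕜] [NormedAddCommGroup E] [InnerProductSpace 𝕜 E]
  [FiniteDimensional 𝕜 E] [Fintype ι]

theorem Orthonormal.exists_orthonormal_extension_of_card_le
    (hcard : Fintype.card ι ≤ finrank 𝕜 E) {v : ι → E} {s : Set ι}
    (hv : Orthonormal 𝕜 (s.domRestrict v)) :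
    ∃ w : ι → E, Orthonormal 𝕜 w ∧ ∀ i ∈ s, w i = v i := by
  classical
  -- pad `ι` to an index type of cardinality `finrank 𝕜 E`, where the family extends to a basis
  let ι' := ι ⊕ Fin (finrank 𝕜 E - Fintype.card ι)
  have hv' : Orthonormal 𝕜 ((Sum.inl '' s : Set ι').domRestrict (Sum.elim v 0)) := by
    rw [orthonormal_iff_ite] at hv ⊢
    rintro ⟨_, i, hi, rfl⟩ ⟨_, j, hj, rfl⟩
    simpa [ι', Set.domRestrict, Subtype.ext_iff] using hv ⟨i, hi⟩ ⟨j, hj⟩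
  obtain ⟨b, hb⟩ := hv'.exists_orthonormalBasis_extension_of_card_eq (by simp [ι']; omega)
  exact ⟨b ∘ Sum.inl, b.orthonormal.comp _ Sum.inl_injective,
    fun i hi => hb _ (Set.mem_image_of_mem _ hi)⟩

theorem exists_orthonormal_smul_eq_of_pairwise_inner_eq_zero {d : ι → E}
    (hd : Pairwise fun i j => ⟪d i, d j⟫_𝕜 = 0) (hcard : Fintype.card ι ≤ finrank 𝕜 E) :
    ∃ c : ι → E, Orthonormal 𝕜 c ∧ ∀ i, d i = (‖d i‖ : 𝕜) • c i := by
  set v : ι → E := fun i => (‖d i‖⁻¹ : 𝕜) • d i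
  have hv : Orthonormal 𝕜 ({i | d i ≠ 0}.domRestrict v) :=
    ⟨fun i => norm_smul_inv_norm i.2, fun i j hij => by
      simp [Set.domRestrict, v, inner_smul_left, inner_smul_right,
        hd (Subtype.coe_injective.ne hij)]⟩
  obtain ⟨c, hc, hcv⟩ := hv.exists_orthonormal_extension_of_card_le hcard
  refine ⟨c, hc, fun i => ?_⟩
  by_cases hi : d i = 0
  · simp [hi]
  · rw [hcv i hi, smul_inv_smul₀ (by simpa using hi)]

end InnerProductSpace

namespace Matrix

section Columns

variable {𝕜 m ι : Type*} [RCLike 𝕜] [Fintype m]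

def euclideanCol (A : Matrix m ι 𝕜) (i : ι) : EuclideanSpace 𝕜 m :=
  WithLp.toLp 2 fun j => A j i

theorem inner_euclideanCol (A B : Matrix m ι 𝕜) (i i' : ι) :
    ⟪A.euclideanCol i, B.euclideanCol i'⟫_𝕜 = (Aᴴ * B) i i' := by
  simp [euclideanCol, EuclideanSpace.inner_toLp_toLp, mul_apply, dotProduct, mul_comm]

theorem conjTranspose_mul_self_eq_one_iff_orthonormal [DecidableEq ι] (A : Matrix m ι 𝕜) :
    Aᴴ * A = 1 ↔ Orthonormal 𝕜 A.euclideanCol := by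
  rw [← gram_eq_one_iff_orthonormal]
  exact Eq.congr_left (Matrix.ext fun i i' => (A.inner_euclideanCol A i i').symm)

theorem norm_euclideanCol_of_conjTranspose_mul_self_eq_diagonal [DecidableEq ι]
    {A : Matrix m ι 𝕜} {μ : ι → ℝ} (hA : Aᴴ * A = diagonal fun i => (μ i : 𝕜)) (i : ι) :
    ‖A.euclideanCol i‖ = √(μ i) := by
  rw [norm_eq_sqrt_re_inner (𝕜 := 𝕜), inner_euclideanCol, hA, diagonal_apply_eq,
    RCLike.ofReal_re]

theorem re_trace_conjTranspose_mul_le [Fintype ι] (A B : Matrix m ι 𝕜) :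
    RCLike.re (trace (Aᴴ * B)) ≤ ∑ i, ‖A.euclideanCol i‖ * ‖B.euclideanCol i‖ := by
  rw [trace, map_sum]
  exact Finset.sum_le_sum fun i _ => by
    rw [diag_apply, ← inner_euclideanCol]
    exact re_inner_le_norm _ _

theorem exists_conjTranspose_mul_self_eq_one_and_eq_mul_diagonal [Fintype ι] [DecidableEq ι]
    {D : Matrix m ι 𝕜} {μ : ι → ℝ} (hD : Dᴴ * D = diagonal fun i => (μ i : 𝕜))
    (hcard : Fintype.card ι ≤ Fintype.card m) :
    ∃ C : Matrix m ι 𝕜, Cᴴ * C = 1 ∧ D = C * diagonal fun i => (√(μ i) : 𝕜) := by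
  have hD_orth : Pairwise fun i i' => ⟪D.euclideanCol i, D.euclideanCol i'⟫_𝕜 = 0 :=
    fun i i' hii' => (inner_euclideanCol D D i i').trans (by rw [hD, diagonal_apply_ne _ hii'])
  obtain ⟨c, hc, hDc⟩ := exists_orthonormal_smul_eq_of_pairwise_inner_eq_zero hD_orth
    (by simpa using hcard)
  refine ⟨of fun j i => c i j, (conjTranspose_mul_self_eq_one_iff_orthonormal _).mpr hc, ?_⟩
  ext j i
  rw [mul_diagonal, ← norm_euclideanCol_of_conjTranspose_mul_self_eq_diagonal hD, of_apply,
    mul_comm]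
  exact congr($(hDc i) j)

end Columns

section Polar

variable {𝕜 m n : Type*} [RCLike 𝕜] [Fintype m] [Fintype n] [DecidableEq n]

theorem IsHermitian.conjTranspose_mul_self_mul_eigenvectorUnitary {B : Matrix m n 𝕜}
    (hH : (Bᴴ * B).IsHermitian) :
    (B * (hH.eigenvectorUnitary : Matrix n n 𝕜))ᴴ * (B * (hH.eigenvectorUnitary : Matrix n n 𝕜))
      = diagonal fun i => (hH.eigenvalues i : 𝕜) := by
  have h := hH.conjStarAlgAut_star_eigenvectorUnitary
  rw [Unitary.conjStarAlgAut_star_apply, star_eq_conjTranspose] at h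
  rw [conjTranspose_mul]
  simp only [Matrix.mul_assoc] at h ⊢
  exact h

theorem IsHermitian.re_trace_conjTranspose_mul_le_sum_sqrt_eigenvalues {B : Matrix m n 𝕜}
    (hH : (Bᴴ * B).IsHermitian) {P : Matrix m n 𝕜} (hP : Pᴴ * P = 1) :
    RCLike.re (trace (Pᴴ * B)) ≤ ∑ i, √(hH.eigenvalues i) := by
  set V : Matrix n n 𝕜 := ↑hH.eigenvectorUnitary
  have hV : V * Vᴴ = 1 := mem_unitaryGroup_iff.mp hH.eigenvectorUnitary.2
  have hPV : Orthonormal 𝕜 (P * V).euclideanCol := by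
    rw [← conjTranspose_mul_self_eq_one_iff_orthonormal, conjTranspose_mul, Matrix.mul_assoc,
      ← Matrix.mul_assoc Pᴴ, hP, Matrix.one_mul]
    exact mem_unitaryGroup_iff'.mp hH.eigenvectorUnitary.2
  have hBV : (B * V)ᴴ * (B * V) = diagonal fun i => (hH.eigenvalues i : 𝕜) :=
    hH.conjTranspose_mul_self_mul_eigenvectorUnitary
  have htrace : trace (Pᴴ * B) = trace ((P * V)ᴴ * (B * V)) := by
    rw [conjTranspose_mul, Matrix.mul_assoc, trace_mul_comm Vᴴ, Matrix.mul_assoc,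
      Matrix.mul_assoc, hV, Matrix.mul_one]
  calc RCLike.re (trace (Pᴴ * B))
      ≤ ∑ i, ‖(P * V).euclideanCol i‖ * ‖(B * V).euclideanCol i‖ := by
        rw [htrace]; exact re_trace_conjTranspose_mul_le _ _
    _ = ∑ i, √(hH.eigenvalues i) := by
        simp only [hPV.norm_eq_one, one_mul,
          norm_euclideanCol_of_conjTranspose_mul_self_eq_diagonal hBV]

open scoped MatrixOrder in
theorem PosSemidef.trace_eq_sum_sqrt_eigenvalues_of_sq_eq {A Λ : Matrix n n 𝕜}
    (hA : A.IsHermitian) (hΛ : Λ.PosSemidef) (h : Λ ^ 2 = A) :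
    trace Λ = ∑ i, (√(hA.eigenvalues i) : 𝕜) := by
  have hA' : A.PosSemidef := h ▸ hΛ.pow 2
  have hs : Λ = CFC.sqrt A :=
    ((CFC.sqrt_eq_iff A Λ hA'.nonneg hΛ.nonneg).mpr (by rw [← sq]; exact h)).symm
  rw [hs, CFC.sqrt_eq_cfc, cfc_nnreal_eq_real _ A hA'.nonneg, hA.cfc_eq, IsHermitian.cfc,
    Unitary.conjStarAlgAut_apply, trace_mul_comm, ← Matrix.mul_assoc,
    Unitary.coe_star_mul_self, Matrix.one_mul, trace_diagonal]
  refine Finset.sum_congr rfl fun i _ => ?_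
  simp [Real.coe_toNNReal', max_eq_left (hA'.eigenvalues_nonneg i)]

theorem IsHermitian.trace_conjTranspose_mul_eq_sum_sqrt_eigenvalues_of_eq_mul
    {B : Matrix m n 𝕜} (hH : (Bᴴ * B).IsHermitian) {P : Matrix m n 𝕜} {Λ : Matrix n n 𝕜}
    (hP : Pᴴ * P = 1) (hΛ : Λ.PosSemidef) (hB : B = P * Λ) :
    trace (Pᴴ * B) = ∑ i, (√(hH.eigenvalues i) : 𝕜) := by
  subst hB
  have hΛsq : Λ ^ 2 = (P * Λ)ᴴ * (P * Λ) := by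
    rw [conjTranspose_mul, hΛ.isHermitian.eq, sq, Matrix.mul_assoc, ← Matrix.mul_assoc Pᴴ, hP,
      Matrix.one_mul]
  rw [← Matrix.mul_assoc, hP, Matrix.one_mul]
  exact hΛ.trace_eq_sum_sqrt_eigenvalues_of_sq_eq hH hΛsq

theorem exists_polar_decomposition (B : Matrix m n 𝕜)
    (hcard : Fintype.card n ≤ Fintype.card m) :
    ∃ (P : Matrix m n 𝕜) (Λ : Matrix n n 𝕜), Pᴴ * P = 1 ∧ Λ.PosSemidef ∧ B = P * Λ := by
  have hH := (posSemidef_conjTranspose_mul_self B).isHermitian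
  set V : Matrix n n 𝕜 := ↑hH.eigenvectorUnitary
  have hV : V * Vᴴ = 1 := mem_unitaryGroup_iff.mp hH.eigenvectorUnitary.2
  have hV' : Vᴴ * V = 1 := mem_unitaryGroup_iff'.mp hH.eigenvectorUnitary.2
  set S : Matrix n n 𝕜 := diagonal fun i => (√(hH.eigenvalues i) : 𝕜)
  obtain ⟨C, hC, hBV⟩ : ∃ C : Matrix m n 𝕜, Cᴴ * C = 1 ∧ B * V = C * S :=
    exists_conjTranspose_mul_self_eq_one_and_eq_mul_diagonal
      hH.conjTranspose_mul_self_mul_eigenvectorUnitary hcard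
  refine ⟨C * Vᴴ, V * S * Vᴴ, ?_, ?_, ?_⟩
  · rw [conjTranspose_mul, conjTranspose_conjTranspose, Matrix.mul_assoc,
      ← Matrix.mul_assoc Cᴴ, hC, Matrix.one_mul, hV]
  · exact (posSemidef_diagonal_iff.mpr fun i => RCLike.ofReal_nonneg.mpr (Real.sqrt_nonneg _)
      ).mul_mul_conjTranspose_same V
  · calc B = B * V * Vᴴ := by rw [Matrix.mul_assoc, hV, Matrix.mul_one]
      _ = C * S * Vᴴ := by rw [hBV]
      _ = C * Vᴴ * (V * S * Vᴴ) := by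
        simp only [Matrix.mul_assoc, ← Matrix.mul_assoc Vᴴ V, hV', Matrix.one_mul]

end Polar

end Matrix

theorem sum_sortedDesc {m : ℕ} (f : Fin m → ℝ) : ∑ i, sortedDesc f i = ∑ i, f i :=
  (Fintype.sum_equiv Fin.revPerm _ _ fun _ => rfl).trans (Equiv.sum_comp (Tuple.sort f) f)

theorem max_re_trace_eq_trNorm {n k : ℕ} (hkn : k ≤ n) (B : Matrix (Fin n) (Fin k) ℂ) :
    IsGreatest {x : ℝ | ∃ P : Matrix (Fin n) (Fin k) ℂ,
        Pᴴ * P = 1 ∧ x = (Matrix.trace (Pᴴ * B)).re} (trNorm B) ∧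
    ∀ (Pstar : Matrix (Fin n) (Fin k) ℂ) (Λ : Matrix (Fin k) (Fin k) ℂ),
      Pstarᴴ * Pstar = 1 → Λ.PosSemidef → B = Pstar * Λ →
      (Matrix.trace (Pstarᴴ * B)).re = trNorm B := by
  have hH := (posSemidef_conjTranspose_mul_self B).isHermitian
  have htrNorm : trNorm B = ∑ i, √(hH.eigenvalues i) := sum_sortedDesc _
  have hpolar : ∀ (Pstar : Matrix (Fin n) (Fin k) ℂ) (Λ : Matrix (Fin k) (Fin k) ℂ),
      Pstarᴴ * Pstar = 1 → Λ.PosSemidef → B = Pstar * Λ →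
      (Matrix.trace (Pstarᴴ * B)).re = trNorm B := fun P Λ hP hΛ hB => by
    rw [hH.trace_conjTranspose_mul_eq_sum_sqrt_eigenvalues_of_eq_mul hP hΛ hB, htrNorm,
      Complex.re_sum]
    simp
  obtain ⟨P, Λ, hP, hΛ, hB⟩ := B.exists_polar_decomposition (by simpa using hkn)
  refine ⟨⟨⟨P, hP, (hpolar P Λ hP hΛ hB).symm⟩, ?_⟩, hpolar⟩
  rintro _ ⟨Q, hQ, rfl⟩
  exact htrNorm ▸ hH.re_trace_conjTranspose_mul_le_sum_sqrt_eigenvalues hQ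
end

section
/- Let B ∈ ℂ^{n×k} have rank k (k ≤ n) with unique orthonormal polar factor P_*. For any P ∈ ℂ^{n×k} with orthonormal columns, let η = ‖B‖_tr − Re(tr(Pᴴ B)) and ε = √(2η / σ_min(B)). Then ‖sin Θ(R(P), R(P_*))‖_F ≤ ε. -/
/-!
Write `S = (BᴴB)^{1/2}`, so that `P_* = B S⁻¹` and `P_* S = B`, and put `M = Pᴴ P_*`. The singular
values of `M` are the cosines of the canonical angles, hence
`‖sin Θ‖_F² = k - tr MᴴM ≤ 2 (k - Re tr M)`, the inequality being `tr (1 - M)ᴴ(1 - M) ≥ 0`.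
On the other hand `η = tr S - Re tr (M S)` because `tr S = ‖B‖_tr`, and the positivity of
`tr ((P - P_*)(S - σ_min)(P - P_*)ᴴ)` expands to `σ_min (k - Re tr M) ≤ η`.
-/

open scoped ComplexOrder
open Matrix

open scoped MatrixOrder

section SortedDesc

variable {m : ℕ} (f : Fin m → ℝ)

lemma sum_comp_sortedDesc {M : Type*} [AddCommMonoid M] (g : ℝ → M) :
    ∑ i, g (sortedDesc f i) = ∑ i, g (f i) :=
  (Fin.revPerm.trans (Tuple.sort f)).sum_comp (g ∘ f)

lemma iInf_sortedDesc : ⨅ i, sortedDesc f i = ⨅ i, f i :=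
  (Fin.revPerm.trans (Tuple.sort f)).iInf_comp

end SortedDesc

lemma Matrix.isUnit_of_rank_eq_card {n K : Type*} [Fintype n] [DecidableEq n] [Field K]
    {A : Matrix n n K} (h : A.rank = Fintype.card n) : IsUnit A := by
  rw [← Matrix.mulVec_injective_iff_isUnit, ← Matrix.coe_mulVecLin,
    LinearMap.injective_iff_surjective, ← LinearMap.range_eq_top]
  apply Submodule.eq_top_of_finrank_eq
  rw [← Matrix.rank, h, Module.finrank_fintype_fun_eq_card]

lemma Matrix.IsHermitian.trace_cfc {n 𝕜 : Type*} [Fintype n] [DecidableEq n] [RCLike 𝕜]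
    {A : Matrix n n 𝕜} (hA : A.IsHermitian) (f : ℝ → ℝ) :
    (cfc f A).trace = ∑ i, (f (hA.eigenvalues i) : 𝕜) := by
  rw [hA.cfc_eq, IsHermitian.cfc, Unitary.conjStarAlgAut_apply, trace_mul_cycle,
    Unitary.star_mul_self_of_mem hA.eigenvectorUnitary.2, one_mul, trace_diagonal]
  rfl

lemma Real.sin_arccos_sqrt_sq {x : ℝ} (h0 : 0 ≤ x) (h1 : x ≤ 1) :
    Real.sin (Real.arccos √x) ^ 2 = 1 - x := by
  rw [Real.sin_arccos, Real.sq_sqrt h0, Real.sq_sqrt (by linarith)]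

section PolarFactor

variable {n k : ℕ} (B : Matrix (Fin n) (Fin k) ℂ)

lemma sqrt_conjTranspose_mul_self_eq_cfc : CFC.sqrt (Bᴴ * B) = cfc Real.sqrt (Bᴴ * B) := by
  rw [CFC.sqrt_eq_real_sqrt _ (posSemidef_conjTranspose_mul_self B).nonneg, cfcₙ_eq_cfc]

lemma polarFactor_eq_mul_inv_sqrt : polarFactor B = B * (CFC.sqrt (Bᴴ * B))⁻¹ := by
  rw [sqrt_conjTranspose_mul_self_eq_cfc, (posSemidef_conjTranspose_mul_self B).isHermitian.cfc_eq]
  rfl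

lemma trNorm_eq_re_trace_sqrt : trNorm B = (CFC.sqrt (Bᴴ * B)).trace.re := by
  rw [sqrt_conjTranspose_mul_self_eq_cfc,
    (posSemidef_conjTranspose_mul_self B).isHermitian.trace_cfc, Complex.re_sum, trNorm, sv]
  exact sum_comp_sortedDesc _ id

lemma algebraMap_smin_le_sqrt : algebraMap ℝ _ (smin B) ≤ CFC.sqrt (Bᴴ * B) := by
  have hH := (posSemidef_conjTranspose_mul_self B).isHermitian
  rw [sqrt_conjTranspose_mul_self_eq_cfc]
  refine algebraMap_le_cfc _ _ _ fun x hx => ?_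
  rw [hH.spectrum_real_eq_range_eigenvalues] at hx
  obtain ⟨i, rfl⟩ := hx
  rw [smin, sv, iInf_sortedDesc]
  exact ciInf_le (Set.finite_range _).bddBelow i

variable {B}

lemma isUnit_conjTranspose_mul_self (hB : B.rank = k) : IsUnit (Bᴴ * B) :=
  isUnit_of_rank_eq_card (by rw [rank_conjTranspose_mul_self, hB, Fintype.card_fin])

lemma smin_pos [NeZero k] (hB : B.rank = k) : 0 < smin B := by
  have hpos := ((posSemidef_conjTranspose_mul_self B).posDef_iff_isUnit.mpr
    (isUnit_conjTranspose_mul_self hB)).eigenvalues_pos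
  obtain ⟨i, hi⟩ := exists_eq_ciInf_of_finite (f := fun i =>
    √((posSemidef_conjTranspose_mul_self B).isHermitian.eigenvalues i))
  rw [smin, sv, iInf_sortedDesc, ← hi]
  exact Real.sqrt_pos.mpr (hpos i)

lemma polarFactor_mul_sqrt (hB : B.rank = k) : polarFactor B * CFC.sqrt (Bᴴ * B) = B := by
  have hS := (CFC.isUnit_sqrt_iff _ (posSemidef_conjTranspose_mul_self B).nonneg).mpr
    (isUnit_conjTranspose_mul_self hB)
  rw [polarFactor_eq_mul_inv_sqrt, Matrix.mul_assoc,
    nonsing_inv_mul _ ((isUnit_iff_isUnit_det _).mp hS), Matrix.mul_one]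

lemma conjTranspose_polarFactor_mul_self (hB : B.rank = k) :
    (polarFactor B)ᴴ * polarFactor B = 1 := by
  have hS := (isUnit_iff_isUnit_det _).mp <| (CFC.isUnit_sqrt_iff _
    (posSemidef_conjTranspose_mul_self B).nonneg).mpr (isUnit_conjTranspose_mul_self hB)
  rw [polarFactor_eq_mul_inv_sqrt]
  set S := CFC.sqrt (Bᴴ * B)
  have hSH : Sᴴ = S := (CFC.sqrt_nonneg _).isSelfAdjoint
  calc (B * S⁻¹)ᴴ * (B * S⁻¹) = S⁻¹ * (S * S) * S⁻¹ := by
        rw [conjTranspose_mul, conjTranspose_nonsing_inv, hSH,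
          CFC.sqrt_mul_sqrt_self _ (posSemidef_conjTranspose_mul_self B).nonneg]
        simp only [Matrix.mul_assoc]
    _ = 1 := by
        rw [← Matrix.mul_assoc, nonsing_inv_mul _ hS, Matrix.one_mul, mul_nonsing_inv _ hS]

end PolarFactor

section OrthonormalColumns

variable {𝕜 m n : Type*} [RCLike 𝕜] [Fintype m] [Fintype n]

lemma Matrix.re_trace_conjTranspose_mul {M T : Matrix n n 𝕜} (hT : T.IsHermitian) :
    RCLike.re (Mᴴ * T).trace = RCLike.re (M * T).trace := by
  have h : Mᴴ * T = (Tᴴ * M)ᴴ := by rw [conjTranspose_mul, conjTranspose_conjTranspose]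
  rw [h, trace_conjTranspose, RCLike.star_def, RCLike.conj_re, hT.eq, trace_mul_comm]

variable [DecidableEq n]

lemma Matrix.mul_conjTranspose_le_one [DecidableEq m] {X : Matrix m n 𝕜} (hX : Xᴴ * X = 1) :
    X * Xᴴ ≤ 1 := by
  have hproj : (1 - X * Xᴴ)ᴴ * (1 - X * Xᴴ) = 1 - X * Xᴴ := by
    simp only [conjTranspose_sub, conjTranspose_one, conjTranspose_mul,
      conjTranspose_conjTranspose, sub_mul, mul_sub, one_mul, mul_one]
    rw [Matrix.mul_assoc, ← Matrix.mul_assoc Xᴴ, hX, Matrix.one_mul]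
    abel
  rw [le_iff, ← hproj]
  exact posSemidef_conjTranspose_mul_self _

lemma Matrix.conjTranspose_mul_conjTranspose_mul_le_one [DecidableEq m] {X Y : Matrix m n 𝕜}
    (hX : Xᴴ * X = 1) (hY : Yᴴ * Y = 1) : (Xᴴ * Y)ᴴ * (Xᴴ * Y) ≤ 1 := by
  have h := (le_iff.mp (mul_conjTranspose_le_one hX)).conjTranspose_mul_mul_same Y
  rw [le_iff]
  convert h using 1
  simp only [Matrix.mul_sub, Matrix.sub_mul, Matrix.mul_one, hY, conjTranspose_mul,
    conjTranspose_conjTranspose, Matrix.mul_assoc]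

lemma Matrix.IsHermitian.eigenvalues_le_one {A : Matrix n n 𝕜} (hA : A.IsHermitian) (h : A ≤ 1)
    (i : n) : hA.eigenvalues i ≤ 1 := by
  rw [← map_one (algebraMap ℝ (Matrix n n 𝕜)),
    le_algebraMap_iff_spectrum_le hA.isSelfAdjoint] at h
  exact h _ (hA.eigenvalues_mem_spectrum_real i)

lemma Matrix.card_sub_re_trace_conjTranspose_mul_self_le (M : Matrix n n 𝕜) :
    (Fintype.card n : ℝ) - RCLike.re (Mᴴ * M).trace ≤
      2 * (Fintype.card n - RCLike.re M.trace) := by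
  have h := RCLike.nonneg_iff.mp (posSemidef_conjTranspose_mul_self (1 - M)).trace_nonneg |>.1
  have hexp : (1 - M)ᴴ * (1 - M) = 1 - M - Mᴴ + Mᴴ * M := by
    simp only [conjTranspose_sub, conjTranspose_one, sub_mul, mul_sub, one_mul, mul_one]
    abel
  rw [hexp, trace_add, trace_sub, trace_sub, trace_conjTranspose, trace_one] at h
  simp only [map_add, map_sub, RCLike.natCast_re, RCLike.star_def, RCLike.conj_re] at h
  linarith

lemma Matrix.mul_card_sub_re_trace_le_re_trace_sub {P Q : Matrix m n 𝕜} (hP : Pᴴ * P = 1)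
    (hQ : Qᴴ * Q = 1) {S : Matrix n n 𝕜} {c : ℝ} (hc : algebraMap ℝ _ c ≤ S) :
    c * (Fintype.card n - RCLike.re (Pᴴ * Q).trace) ≤
      RCLike.re S.trace - RCLike.re (Pᴴ * Q * S).trace := by
  set T := S - algebraMap ℝ _ c
  have hT : T.PosSemidef := le_iff.mp hc
  have h := RCLike.nonneg_iff.mp (hT.mul_mul_conjTranspose_same (P - Q)).trace_nonneg |>.1
  have hgram : (P - Q)ᴴ * (P - Q) = 1 - Pᴴ * Q + (1 - (Pᴴ * Q)ᴴ) := by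
    simp only [conjTranspose_sub, Matrix.sub_mul, Matrix.mul_sub, hP, hQ, conjTranspose_mul,
      conjTranspose_conjTranspose]
    abel
  rw [trace_mul_cycle, hgram, add_mul, trace_add, map_add, sub_mul, sub_mul, trace_sub, trace_sub,
    map_sub, map_sub, re_trace_conjTranspose_mul hT.isHermitian, one_mul] at h
  have hTr : RCLike.re T.trace = RCLike.re S.trace - c * Fintype.card n := by
    simp [T, trace_sub, Algebra.algebraMap_eq_smul_one, trace_smul, RCLike.smul_re]
  have hMT : RCLike.re (Pᴴ * Q * T).trace =
      RCLike.re (Pᴴ * Q * S).trace - c * RCLike.re (Pᴴ * Q).trace := by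
    simp [T, mul_sub, trace_sub, Algebra.algebraMap_eq_smul_one, trace_smul, RCLike.smul_re]
  linarith

end OrthonormalColumns

lemma sinThetaF_eq {n k : ℕ} {X Y : Matrix (Fin n) (Fin k) ℂ} (hX : Xᴴ * X = 1)
    (hY : Yᴴ * Y = 1) : sinThetaF X Y = √(k - ((Xᴴ * Y)ᴴ * (Xᴴ * Y)).trace.re) := by
  have hG := posSemidef_conjTranspose_mul_self (Xᴴ * Y)
  have hle := hG.isHermitian.eigenvalues_le_one (conjTranspose_mul_conjTranspose_mul_le_one hX hY)
  rw [sinThetaF, sv, sum_comp_sortedDesc _ fun x => Real.sin (Real.arccos x) ^ 2,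
    hG.isHermitian.trace_eq_sum_eigenvalues, ← RCLike.re_to_complex, map_sum]
  simp only [Real.sin_arccos_sqrt_sq (hG.eigenvalues_nonneg _) (hle _), RCLike.ofReal_re,
    Finset.sum_sub_distrib, Finset.sum_const, Finset.card_univ, Fintype.card_fin, nsmul_eq_mul,
    mul_one]

theorem sinTheta_le_eps_general {n k : ℕ} (B P : Matrix (Fin n) (Fin k) ℂ)
    (hrank : B.rank = k) (hP : Pᴴ * P = 1) :
    sinThetaF P (polarFactor B) ≤
      Real.sqrt (2 * (trNorm B - (Matrix.trace (Pᴴ * B)).re) / smin B) := by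
  obtain rfl | hk := Nat.eq_zero_or_pos k
  · simp [sinThetaF]
  have : NeZero k := ⟨hk.ne'⟩
  have hPs := conjTranspose_polarFactor_mul_self hrank
  have hgap :
      smin B * (k - (Pᴴ * polarFactor B).trace.re) ≤ trNorm B - (Pᴴ * B).trace.re := by
    have h := mul_card_sub_re_trace_le_re_trace_sub hP hPs (algebraMap_smin_le_sqrt B)
    simp only [Fintype.card_fin, RCLike.re_to_complex] at h
    rwa [Matrix.mul_assoc, polarFactor_mul_sqrt hrank, ← trNorm_eq_re_trace_sqrt] at h
  have hangle := card_sub_re_trace_conjTranspose_mul_self_le (Pᴴ * polarFactor B)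
  simp only [Fintype.card_fin, RCLike.re_to_complex] at hangle
  rw [sinThetaF_eq hP hPs]
  gcongr
  have hsmin := smin_pos hrank
  rw [le_div_iff₀ hsmin]
  nlinarith

theorem sinTheta_le_eps {n k : ℕ} (hkn : k ≤ n) (B P : Matrix (Fin n) (Fin k) ℂ)
    (hrank : B.rank = k) (hP : Pᴴ * P = 1) :
    sinThetaF P (polarFactor B) ≤
      Real.sqrt (2 * (trNorm B - (Matrix.trace (Pᴴ * B)).re) / smin B) :=
  sinTheta_le_eps_general B P hrank hP
end
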